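/- arXiv:1902.01883 — 6 statements merged into one kernel-verified Lean document; each statement's English description precedes it below -/
import Mathlib

section
/- For any discount factor γ with 0 ≤ γ < 1, we have γ^(1/(1-γ)) ≤ 1/e. -/
/-- For any discount factor `γ` with `0 ≤ γ < 1`, we have `γ ^ (1/(1-γ)) ≤ 1/e`,
where the power is the real power (so `0 ^ (1/(1-0)) = 0`). -/
theorem gamma_rpow_horizon_le_inv_exp (γ : ℝ) (h0 : 0 ≤ γ) (h1 : γ < 1) :
    γ ^ ((1 : ℝ) / (1 - γ)) ≤ 1 / Real.exp 1 := by
  have hpos : (0:ℝ) < 1 - γ := by linarith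
  rcases eq_or_lt_of_le h0 with h | h
  · rw [← h, Real.zero_rpow (by positivity)]
    positivity
  · have hlog : Real.log γ ≤ γ - 1 := Real.log_le_sub_one_of_pos h
    have key : Real.log γ / (1 - γ) ≤ -1 := by
      rw [div_le_iff₀ hpos]; linarith
    calc γ ^ ((1 : ℝ) / (1 - γ)) = Real.exp (Real.log γ * (1 / (1 - γ))) := by
          rw [Real.rpow_def_of_pos h]
      _ ≤ Real.exp (-1) := by
          apply Real.exp_le_exp.2
          rw [mul_one_div]; exact key
      _ = 1 / Real.exp 1 := by rw [Real.exp_neg]; ring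
end

section
/- For 0 ≤ λγ < 1 and P a row-stochastic matrix on a finite state space, the operator T_λ defined by T_λ V = V + (I − λγP)^{-1}(T V − V), where T V = r + γ P V, is a contraction in the max norm with contraction coefficient γ|1−λ|/(1−λγ); in particular it is a strict contraction whenever 0 ≤ λ < (1+γ)/(2γ) (for 0 < γ < 1). -/
open Matrix

attribute [local instance] Matrix.linftyOpNormedRing Matrix.linftyOpNormedAlgebra

private lemma td_coeff_lt {γ lam : ℝ} (hγ0 : 0 < γ) (hγ1 : γ < 1) (hlam : 0 ≤ lam)
    (hlg : lam * γ < 1) (h : lam < (1 + γ) / (2 * γ)) :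
    γ * |1 - lam| / (1 - lam * γ) < 1 := by
  have hpos : 0 < 1 - lam * γ := by linarith
  rw [div_lt_one hpos]
  have h2 : lam * (2 * γ) < 1 + γ := (lt_div_iff₀ (by positivity)).mp h
  rcases abs_cases (1 - lam) with ⟨he, _⟩ | ⟨he, _⟩ <;> rw [he] <;> nlinarith

/-- The TD(λ) operator `T_λ V = V + (I - λγP)⁻¹ (T V - V)` is a contraction in the
max norm with coefficient `γ|1-λ|/(1-λγ)`, which is `< 1` when `λ < (1+γ)/(2γ)`. -/
theorem tdLambda_contraction {n : ℕ} (P : Matrix (Fin n) (Fin n) ℝ) (r : Fin n → ℝ)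
    (hPnonneg : ∀ i j, 0 ≤ P i j) (hProw : ∀ i, ∑ j, P i j = 1)
    (γ lam : ℝ) (hγ0 : 0 < γ) (hγ1 : γ < 1) (hlam : 0 ≤ lam) (hlg : lam * γ < 1) :
    (∀ V₁ V₂ : Fin n → ℝ,
      ‖(V₁ + (1 - (lam * γ) • P)⁻¹ *ᵥ ((r + γ • (P *ᵥ V₁)) - V₁)) -
        (V₂ + (1 - (lam * γ) • P)⁻¹ *ᵥ ((r + γ • (P *ᵥ V₂)) - V₂))‖ ≤
        (γ * |1 - lam| / (1 - lam * γ)) * ‖V₁ - V₂‖) ∧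
    (lam < (1 + γ) / (2 * γ) → γ * |1 - lam| / (1 - lam * γ) < 1) := by
  refine ⟨?_, td_coeff_lt hγ0 hγ1 hlam hlg⟩
  have hpos : 0 < 1 - lam * γ := by linarith
  have hlg0 : 0 ≤ lam * γ := by positivity
  rcases Nat.eq_zero_or_pos n with hn | hn
  · subst hn
    intro V₁ V₂
    have h0 : ∀ x : Fin 0 → ℝ, ‖x‖ = 0 := fun x => by
      rw [show x = 0 from Subsingleton.elim _ _]; simp
    rw [h0, h0]
    positivity
  · have : Nonempty (Fin n) := ⟨⟨0, hn⟩⟩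
    intro V₁ V₂
    set W := V₁ - V₂ with hW
    -- norm of P
    have hPnn : ‖P‖₊ ≤ 1 := by
      rw [Matrix.linfty_opNNNorm_def]
      refine Finset.sup_le (fun i _ => ?_)
      rw [← NNReal.coe_le_coe, NNReal.coe_one, NNReal.coe_sum]
      calc (∑ j, (‖P i j‖₊ : ℝ)) = ∑ j, P i j := by
            refine Finset.sum_congr rfl fun j _ => ?_
            rw [coe_nnnorm, Real.norm_eq_abs, abs_of_nonneg (hPnonneg i j)]
        _ = 1 := hProw i
        _ ≤ 1 := le_rfl
    have hPnorm : ‖P‖ ≤ 1 := by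
      have := NNReal.coe_le_coe.mpr hPnn
      simpa using this
    set M : Matrix (Fin n) (Fin n) ℝ := (lam * γ) • P with hM
    have hMnorm : ‖M‖ ≤ lam * γ := by
      rw [hM, norm_smul, Real.norm_eq_abs, abs_of_nonneg hlg0]
      nlinarith [norm_nonneg P]
    have hMlt : ‖M‖ < 1 := lt_of_le_of_lt hMnorm hlg
    set A : Matrix (Fin n) (Fin n) ℝ := 1 - M with hA
    have hAunit : IsUnit A := isUnit_one_sub_of_norm_lt_one hMlt
    have hAinv : A⁻¹ = ∑' k : ℕ, M ^ k := by
      rw [Matrix.nonsing_inv_eq_ringInverse, ← geom_series_eq_inverse M hMlt]; rfl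
    -- bound on ‖A⁻¹‖
    have hsum : Summable fun k : ℕ => ‖M ^ k‖ :=
      Summable.of_nonneg_of_le (fun k => norm_nonneg _)
        (fun k => (norm_pow_le M k).trans (pow_le_pow_left₀ (norm_nonneg _) hMnorm k))
        (summable_geometric_of_lt_one hlg0 hlg)
    have hAinvNorm : ‖A⁻¹‖ ≤ (1 - lam * γ)⁻¹ := by
      rw [hAinv]
      calc ‖∑' k : ℕ, M ^ k‖ ≤ ∑' k : ℕ, ‖M ^ k‖ := norm_tsum_le_tsum_norm hsum
        _ ≤ ∑' k : ℕ, (lam * γ) ^ k := by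
            refine Summable.tsum_le_tsum (fun k => ?_) hsum (summable_geometric_of_lt_one hlg0 hlg)
            exact (norm_pow_le M k).trans (pow_le_pow_left₀ (norm_nonneg _) hMnorm k)
        _ = (1 - lam * γ)⁻¹ := tsum_geometric_of_lt_one hlg0 hlg
    -- algebraic identity
    have hAW : A *ᵥ W = W - (lam * γ) • (P *ᵥ W) := by
      rw [hA, Matrix.sub_mulVec, Matrix.one_mulVec, hM, Matrix.smul_mulVec]
    have hid : (V₁ + A⁻¹ *ᵥ ((r + γ • (P *ᵥ V₁)) - V₁)) -
        (V₂ + A⁻¹ *ᵥ ((r + γ • (P *ᵥ V₂)) - V₂)) =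
        (γ * (1 - lam)) • (A⁻¹ *ᵥ (P *ᵥ W)) := by
      have hWmul : A⁻¹ *ᵥ (A *ᵥ W) = W := by
        rw [Matrix.mulVec_mulVec, Matrix.nonsing_inv_mul A ((Matrix.isUnit_iff_isUnit_det A).mp hAunit),
          Matrix.one_mulVec]
      calc (V₁ + A⁻¹ *ᵥ ((r + γ • (P *ᵥ V₁)) - V₁)) -
            (V₂ + A⁻¹ *ᵥ ((r + γ • (P *ᵥ V₂)) - V₂))
          = W + (A⁻¹ *ᵥ ((r + γ • (P *ᵥ V₁)) - V₁) -
              A⁻¹ *ᵥ ((r + γ • (P *ᵥ V₂)) - V₂)) := by rw [hW]; module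
          _ = W + A⁻¹ *ᵥ (γ • (P *ᵥ W) - W) := by
            have hdiff : ((r + γ • (P *ᵥ V₁)) - V₁) - ((r + γ • (P *ᵥ V₂)) - V₂) =
                γ • (P *ᵥ W) - W := by
              rw [hW, Matrix.mulVec_sub]
              module
            rw [← Matrix.mulVec_sub, hdiff]
          _ = A⁻¹ *ᵥ (A *ᵥ W) + A⁻¹ *ᵥ (γ • (P *ᵥ W) - W) := by rw [hWmul]
          _ = A⁻¹ *ᵥ (A *ᵥ W + (γ • (P *ᵥ W) - W)) := by rw [Matrix.mulVec_add]
          _ = A⁻¹ *ᵥ ((γ * (1 - lam)) • (P *ᵥ W)) := by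
            rw [hAW]
            have hv : W - (lam * γ) • (P *ᵥ W) + (γ • (P *ᵥ W) - W) =
                (γ * (1 - lam)) • (P *ᵥ W) := by module
            rw [hv]
          _ = (γ * (1 - lam)) • (A⁻¹ *ᵥ (P *ᵥ W)) := Matrix.mulVec_smul _ _ _
    rw [hid, norm_smul, Real.norm_eq_abs, abs_mul, abs_of_nonneg hγ0.le]
    have hb : ‖A⁻¹ *ᵥ (P *ᵥ W)‖ ≤ (1 - lam * γ)⁻¹ * ‖W‖ := by
      calc ‖A⁻¹ *ᵥ (P *ᵥ W)‖ ≤ ‖A⁻¹‖ * ‖P *ᵥ W‖ := Matrix.linfty_opNorm_mulVec _ _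
        _ ≤ ‖A⁻¹‖ * (‖P‖ * ‖W‖) := by
            exact mul_le_mul_of_nonneg_left (Matrix.linfty_opNorm_mulVec _ _) (norm_nonneg _)
        _ ≤ (1 - lam * γ)⁻¹ * ‖W‖ := by
            have h1 : ‖P‖ * ‖W‖ ≤ ‖W‖ := by
              nlinarith [norm_nonneg W, norm_nonneg P]
            calc ‖A⁻¹‖ * (‖P‖ * ‖W‖) ≤ ‖A⁻¹‖ * ‖W‖ :=
                  mul_le_mul_of_nonneg_left h1 (norm_nonneg _)
              _ ≤ (1 - lam * γ)⁻¹ * ‖W‖ :=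
                  mul_le_mul_of_nonneg_right hAinvNorm (norm_nonneg _)
    calc γ * |1 - lam| * ‖A⁻¹ *ᵥ (P *ᵥ W)‖
        ≤ γ * |1 - lam| * ((1 - lam * γ)⁻¹ * ‖W‖) := by
          exact mul_le_mul_of_nonneg_left hb (by positivity)
      _ = γ * |1 - lam| / (1 - lam * γ) * ‖W‖ := by ring
end

section
/- Under linear function approximation, if all learning rates are equal (α_z = α for all z), all products satisfy λ_z γ_z = λγ for all z, and the initial weight vectors satisfy Σ_{z=0}^{Z} θ_0^z = θ_0^γ, then the TD(λ) iterates θ_t^γ and the TD(λ,Δ) iterates θ_t^z satisfy Σ_{z=0}^{Z} θ_t^z = θ_t^γ for all t. -/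
open Matrix

/-- Standard TD error at time `k` for linear value estimate with weights `θ`. -/
def tdError {S : Type*} {d : ℕ} (φ : S → Fin d → ℝ) (s : ℕ → S) (r : ℕ → ℝ)
    (γ : ℝ) (θ : Fin d → ℝ) (k : ℕ) : ℝ :=
  r k + γ * (θ ⬝ᵥ φ (s (k + 1))) - θ ⬝ᵥ φ (s k)

/-- TD(Δ) error at time `k` for the `z`-th delta estimator, with discounts `γs`
and weight vectors `θ z`. -/
def deltaTdError {S : Type*} {d : ℕ} (φ : S → Fin d → ℝ) (s : ℕ → S) (r : ℕ → ℝ)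
    (γs : ℕ → ℝ) (θ : ℕ → Fin d → ℝ) : ℕ → ℕ → ℝ
  | 0, k => r k + γs 0 * (θ 0 ⬝ᵥ φ (s (k + 1))) - θ 0 ⬝ᵥ φ (s k)
  | z + 1, k =>
      (γs (z + 1) - γs z) * (∑ u ∈ Finset.range (z + 1), θ u ⬝ᵥ φ (s (k + 1)))
        + γs (z + 1) * (θ (z + 1) ⬝ᵥ φ (s (k + 1))) - θ (z + 1) ⬝ᵥ φ (s k)

lemma sumdot {d : ℕ} {F : Finset ℕ} (f : ℕ → Fin d → ℝ) (v : Fin d → ℝ) :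
    (∑ u ∈ F, f u) ⬝ᵥ v = ∑ u ∈ F, f u ⬝ᵥ v := by
  simp only [dotProduct, Finset.sum_apply, Finset.sum_mul]
  rw [Finset.sum_comm]

lemma sum_deltaTdError {S : Type*} {d : ℕ} (φ : S → Fin d → ℝ) (s : ℕ → S) (r : ℕ → ℝ)
    (γs : ℕ → ℝ) (θ' : ℕ → Fin d → ℝ) (n k : ℕ) :
    ∑ z ∈ Finset.range (n + 1), deltaTdError φ s r γs θ' z k
      = r k + γs n * ((∑ u ∈ Finset.range (n + 1), θ' u) ⬝ᵥ φ (s (k + 1)))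
        - (∑ u ∈ Finset.range (n + 1), θ' u) ⬝ᵥ φ (s k) := by
  induction n with
  | zero => simp [deltaTdError]
  | succ n ih =>
      rw [Finset.sum_range_succ, ih, deltaTdError, ← sumdot,
        Finset.sum_range_succ (fun u => θ' u) (n + 1), add_dotProduct,
        add_dotProduct]
      ring

/-- Equivalence of TD(λ) and TD(λ,Δ) under linear function approximation:
with equal learning rates, `λ_z γ_z = λγ` for all `z`, and matching initial
conditions, the summed TD(λ,Δ) weights equal the TD(λ) weights at all times.
(Returns are truncated at a finite horizon `T`.) -/
theorem tdDelta_equiv_td {S : Type*} {d Z T : ℕ}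
    (φ : S → Fin d → ℝ) (s : ℕ → S) (r : ℕ → ℝ)
    (γs : ℕ → ℝ) (γ : ℝ) (hγZ : γs Z = γ)
    (hγmono : ∀ z < Z, γs z < γs (z + 1))
    (lams : ℕ → ℝ) (lam : ℝ) (hlam : ∀ z ≤ Z, lams z * γs z = lam * γ)
    (α : ℝ)
    (θγ : ℕ → Fin d → ℝ) (θ : ℕ → ℕ → Fin d → ℝ)
    (hθγ : ∀ t : ℕ, θγ (t + 1) = θγ t +
      (α * ∑ k ∈ Finset.range T, (lam * γ) ^ k * tdError φ s r γ (θγ t) (t + k)) • φ (s t))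
    (hθ : ∀ t : ℕ, ∀ z ≤ Z, θ (t + 1) z = θ t z +
      (α * ∑ k ∈ Finset.range T,
        (lams z * γs z) ^ k * deltaTdError φ s r γs (θ t) z (t + k)) • φ (s t))
    (hinit : ∑ z ∈ Finset.range (Z + 1), θ 0 z = θγ 0) :
    ∀ t : ℕ, ∑ z ∈ Finset.range (Z + 1), θ t z = θγ t := by
  intro t
  induction t with
  | zero => exact hinit
  | succ t ih =>
      have hsum : ∀ z ∈ Finset.range (Z + 1), θ (t + 1) z = θ t z +
          (α * ∑ k ∈ Finset.range T,
            (lam * γ) ^ k * deltaTdError φ s r γs (θ t) z (t + k)) • φ (s t) := by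
        intro z hz
        have hzZ : z ≤ Z := Nat.lt_succ_iff.mp (Finset.mem_range.mp hz)
        rw [hθ t z hzZ, hlam z hzZ]
      rw [Finset.sum_congr rfl hsum, Finset.sum_add_distrib, ih, ← Finset.sum_smul, hθγ t]
      congr 2
      rw [← Finset.mul_sum, Finset.sum_comm]
      congr 1
      refine Finset.sum_congr rfl fun k _ => ?_
      rw [← Finset.mul_sum, sum_deltaTdError, ih, hγZ, tdError]
end

section
/- The multi-step expansion of the delta Bellman equation: if W_z = (γ_z − γ_{z−1}) P V_{γ_{z−1}} + γ_z P W_z and V_{γ_{z−1}} = r + γ_{z−1} P V_{γ_{z−1}}, then for every k ≥ 1, W_z = Σ_{i=1}^{k−1} (γ_z^i − γ_{z−1}^i) P^i r + (γ_z^k − γ_{z−1}^k) P^k V_{γ_{z−1}} + γ_z^k P^k W_z. -/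
open Matrix

/-- Multi-step expansion of the delta Bellman equation. -/
theorem delta_multistep {n : ℕ} (P : Matrix (Fin n) (Fin n) ℝ) (r : Fin n → ℝ)
    (hPnonneg : ∀ i j, 0 ≤ P i j) (hProw : ∀ i, ∑ j, P i j = 1)
    (γ₁ γ₂ : ℝ) (h0 : 0 ≤ γ₁) (h12 : γ₁ ≤ γ₂) (h2 : γ₂ < 1)
    (V W : Fin n → ℝ)
    (hV : V = r + γ₁ • (P *ᵥ V))
    (hW : W = (γ₂ - γ₁) • (P *ᵥ V) + γ₂ • (P *ᵥ W)) :
    ∀ k : ℕ, 1 ≤ k →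
      W = (∑ i ∈ Finset.Ico 1 k, (γ₂ ^ i - γ₁ ^ i) • ((P ^ i) *ᵥ r))
          + (γ₂ ^ k - γ₁ ^ k) • ((P ^ k) *ᵥ V)
          + γ₂ ^ k • ((P ^ k) *ᵥ W) := by
  intro k hk
  induction k, hk using Nat.le_induction with
  | base => simpa using hW
  | succ k hk ih =>
    rw [Finset.sum_Ico_succ_top hk]
    calc W = (∑ i ∈ Finset.Ico 1 k, (γ₂ ^ i - γ₁ ^ i) • ((P ^ i) *ᵥ r))
          + (γ₂ ^ k - γ₁ ^ k) • ((P ^ k) *ᵥ (r + γ₁ • (P *ᵥ V)))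
          + γ₂ ^ k • ((P ^ k) *ᵥ ((γ₂ - γ₁) • (P *ᵥ V) + γ₂ • (P *ᵥ W))) := by
            rw [← hV, ← hW]; exact ih
      _ = _ := by
            simp only [mulVec_add, mulVec_smul, pow_succ, ← mulVec_mulVec]
            module
end

section
/- Phased TD(Δ) error bound: assume γ_0 ≤ γ_1 ≤ ... ≤ γ_Z = γ (all in [0,1)) and k_0 ≤ k_1 ≤ ... ≤ k_Z = k. Suppose for each z ≥ 1 the phase-t estimate satisfies |Ŵ_{z,t}(s) − W_z(s)| ≤ Σ_{i=1}^{k_z−1} (γ_z^i − γ_{z−1}^i) ε + (γ_z^{k_z} − γ_{z−1}^{k_z}) Σ_{u=0}^{z−1} Δ^u_{t−1} + γ_z^{k_z} Δ^z_{t−1}, and |Ŵ_{0,t}(s) − W_0(s)| ≤ ε(1−γ_0^{k_0})/(1−γ_0) + γ_0^{k_0} Δ^0_{t−1}. Then Σ_{z=0}^{Z} Δ^z_t ≤ ε(1−γ^k)/(1−γ) + ε Σ_{z=0}^{Z−1} (γ_z^{k_{z+1}} − γ_z^{k_z})/(1−γ_z) + Σ_{z=0}^{Z−1} (γ_z^{k_z}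 − γ_z^{k_{z+1}}) Σ_{u=0}^{z} Δ^u_{t−1} + γ^k Σ_{z=0}^{Z} Δ^z_{t−1}, where Δ^z_t := max_s |Ŵ_{z,t}(s) − W_z(s)|. -/
noncomputable def phasedBnd (γs : ℕ → ℝ) (ks : ℕ → ℕ) (ε : ℝ) (Δprev : ℕ → ℝ) : ℕ → ℝ
  | 0 => ε * ((1 - γs 0 ^ ks 0) / (1 - γs 0)) + γs 0 ^ ks 0 * Δprev 0
  | (z+1) => (∑ i ∈ Finset.Ico 1 (ks (z + 1)), (γs (z + 1) ^ i - γs z ^ i)) * ε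
        + (γs (z + 1) ^ ks (z + 1) - γs z ^ ks (z + 1)) * ∑ u ∈ Finset.range (z + 1), Δprev u
        + γs (z + 1) ^ ks (z + 1) * Δprev (z + 1)

lemma geom_ico (g : ℝ) (hg : g ≠ 1) (k : ℕ) (hk : 1 ≤ k) :
    ∑ i ∈ Finset.Ico 1 k, g ^ i = (1 - g ^ k) / (1 - g) - 1 := by
  have h := geom_sum_eq hg k
  have hr : ∑ i ∈ Finset.range k, g ^ i = (1 - g ^ k) / (1 - g) := by
    rw [h, div_eq_div_iff (sub_ne_zero.mpr hg) (sub_ne_zero.mpr (Ne.symm hg))]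
    ring
  have hsplit : ∑ i ∈ Finset.range k, g ^ i = g ^ 0 + ∑ i ∈ Finset.Ico 1 k, g ^ i := by
    rw [Finset.range_eq_Ico, Finset.sum_eq_sum_Ico_succ_bot hk]
  rw [hsplit] at hr
  simp at hr
  linarith

lemma sum_phasedBnd (γs : ℕ → ℝ) (ks : ℕ → ℕ) (ε : ℝ) (Δprev : ℕ → ℝ) :
    ∀ Z : ℕ, (∀ z ≤ Z, γs z ≠ 1) → (∀ z ≤ Z, 1 ≤ ks z) →
    ∑ z ∈ Finset.range (Z + 1), phasedBnd γs ks ε Δprev z =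
      ε * ((1 - γs Z ^ ks Z) / (1 - γs Z))
      + ε * ∑ z ∈ Finset.range Z, (γs z ^ ks (z + 1) - γs z ^ ks z) / (1 - γs z)
      + (∑ z ∈ Finset.range Z,
          (γs z ^ ks z - γs z ^ ks (z + 1)) * ∑ u ∈ Finset.range (z + 1), Δprev u)
      + γs Z ^ ks Z * ∑ z ∈ Finset.range (Z + 1), Δprev z := by
  intro Z
  induction Z with
  | zero => intro _ _; simp [phasedBnd]
  | succ n ih =>
    intro hγ hk
    have ihn := ih (fun z hz => hγ z (by omega)) (fun z hz => hk z (by omega))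
    rw [Finset.sum_range_succ, ihn]
    have h1 : ∑ i ∈ Finset.Ico 1 (ks (n + 1)), (γs (n + 1) ^ i - γs n ^ i)
        = ((1 - γs (n + 1) ^ ks (n + 1)) / (1 - γs (n + 1)) - 1)
          - ((1 - γs n ^ ks (n + 1)) / (1 - γs n) - 1) := by
      rw [Finset.sum_sub_distrib, geom_ico _ (hγ (n+1) le_rfl) _ (hk (n+1) le_rfl),
        geom_ico _ (hγ n (by omega)) _ (hk (n+1) le_rfl)]
    rw [show phasedBnd γs ks ε Δprev (n + 1) =
      (∑ i ∈ Finset.Ico 1 (ks (n + 1)), (γs (n + 1) ^ i - γs n ^ i)) * ε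
        + (γs (n + 1) ^ ks (n + 1) - γs n ^ ks (n + 1)) * ∑ u ∈ Finset.range (n + 1), Δprev u
        + γs (n + 1) ^ ks (n + 1) * Δprev (n + 1) from rfl, h1]
    rw [Finset.sum_range_succ (fun z => (γs z ^ ks (z+1) - γs z ^ ks z) / (1 - γs z)) n,
      Finset.sum_range_succ (fun z => (γs z ^ ks z - γs z ^ ks (z+1))
        * ∑ u ∈ Finset.range (z + 1), Δprev u) n,
      Finset.sum_range_succ Δprev (n + 1)]
    ring

/-- Phased TD(Δ) error bound: summing the per-component error bounds yields the
variance term, the variance-reduction term, the bias-introduction term, and the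
standard bootstrap term. -/
theorem phased_tdDelta_bound {S : Type*} [Fintype S] [Nonempty S]
    (Z : ℕ) (γs : ℕ → ℝ) (ks : ℕ → ℕ) (γ : ℝ) (k : ℕ) (ε : ℝ) (hε : 0 ≤ ε)
    (hγ0 : ∀ z ≤ Z, 0 ≤ γs z) (hγ1 : ∀ z ≤ Z, γs z < 1)
    (hγmono : ∀ z < Z, γs z ≤ γs (z + 1)) (hγZ : γs Z = γ)
    (hkpos : ∀ z ≤ Z, 1 ≤ ks z) (hkmono : ∀ z < Z, ks z ≤ ks (z + 1)) (hkZ : ks Z = k)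
    (Δprev : ℕ → ℝ) (hΔprev : ∀ z ≤ Z, 0 ≤ Δprev z)
    (What W : ℕ → S → ℝ)
    (hbound0 : ∀ s : S, |What 0 s - W 0 s| ≤
      ε * ((1 - γs 0 ^ ks 0) / (1 - γs 0)) + γs 0 ^ ks 0 * Δprev 0)
    (hbound : ∀ z < Z, ∀ s : S, |What (z + 1) s - W (z + 1) s| ≤
      (∑ i ∈ Finset.Ico 1 (ks (z + 1)), (γs (z + 1) ^ i - γs z ^ i)) * ε
        + (γs (z + 1) ^ ks (z + 1) - γs z ^ ks (z + 1)) * ∑ u ∈ Finset.range (z + 1), Δprev u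
        + γs (z + 1) ^ ks (z + 1) * Δprev (z + 1))
    (Δ : ℕ → ℝ)
    (hΔ : ∀ z, Δ z = Finset.univ.sup' Finset.univ_nonempty fun s : S => |What z s - W z s|) :
    ∑ z ∈ Finset.range (Z + 1), Δ z ≤
      ε * ((1 - γ ^ k) / (1 - γ))
      + ε * ∑ z ∈ Finset.range Z, (γs z ^ ks (z + 1) - γs z ^ ks z) / (1 - γs z)
      + (∑ z ∈ Finset.range Z,
          (γs z ^ ks z - γs z ^ ks (z + 1)) * ∑ u ∈ Finset.range (z + 1), Δprev u)
      + γ ^ k * ∑ z ∈ Finset.range (Z + 1), Δprev z := by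
  have hle : ∀ z ≤ Z, Δ z ≤ phasedBnd γs ks ε Δprev z := by
    intro z hz
    rw [hΔ z]
    apply Finset.sup'_le
    intro s _
    cases z with
    | zero => exact hbound0 s
    | succ w => exact hbound w (by omega) s
  calc ∑ z ∈ Finset.range (Z + 1), Δ z
      ≤ ∑ z ∈ Finset.range (Z + 1), phasedBnd γs ks ε Δprev z := by
        apply Finset.sum_le_sum
        intro z hz
        exact hle z (by simpa using Finset.mem_range_succ_iff.mp hz)
    _ = _ := by
        rw [sum_phasedBnd γs ks ε Δprev Z (fun z hz => ne_of_lt (hγ1 z hz)) hkpos, hγZ, hkZ]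
end

section
/- For γ ∈ [0,1), λ ∈ [0,1), and the Bellman operator T V = r + γPV on a finite state space with row-stochastic P, the operator T_λ V = V + (I−λγP)^{-1}(TV − V) coincides with the geometric mixture (1−λ) Σ_{k=0}^{∞} λ^k T^{k+1} V, i.e., the two definitions of the TD(λ) operator agree for λ ∈ [0,1). -/
open Matrix Filter Topology

/-- For `λ ∈ [0,1)`, the operator `T_λ V = V + (I - λγP)⁻¹(TV - V)` coincides with the
geometric mixture `(1-λ) Σ_k λ^k T^{k+1} V` of iterates of the Bellman operator. -/
theorem tdLambda_eq_geometric_mixture {n : ℕ} (P : Matrix (Fin n) (Fin n) ℝ)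
    (r : Fin n → ℝ) (hPnonneg : ∀ i j, 0 ≤ P i j) (hProw : ∀ i, ∑ j, P i j = 1)
    (γ lam : ℝ) (hγ0 : 0 ≤ γ) (hγ1 : γ < 1) (hlam0 : 0 ≤ lam) (hlam1 : lam < 1) :
    ∀ V : Fin n → ℝ,
      V + (1 - (lam * γ) • P)⁻¹ *ᵥ ((r + γ • (P *ᵥ V)) - V) =
        ∑' k : ℕ, ((1 - lam) * lam ^ k) • ((fun U => r + γ • (P *ᵥ U))^[k + 1] V) := by
  intro V
  set T : (Fin n → ℝ) → (Fin n → ℝ) := fun U => r + γ • (P *ᵥ U) with hTdef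
  set w : Fin n → ℝ := T V - V with hwdef
  set M : Matrix (Fin n) (Fin n) ℝ := (lam * γ) • P with hMdef
  have hlg0 : 0 ≤ lam * γ := mul_nonneg hlam0 hγ0
  have hlg1 : lam * γ < 1 :=
    lt_of_le_of_lt (mul_le_of_le_one_right hlam0 hγ1.le) hlam1
  -- contraction property of P in sup norm
  have hPnorm : ∀ x : Fin n → ℝ, ‖P *ᵥ x‖ ≤ ‖x‖ := by
    intro x
    rw [pi_norm_le_iff_of_nonneg (norm_nonneg x)]
    intro i
    have : ‖(P *ᵥ x) i‖ = |∑ j, P i j * x j| := by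
      simp [Matrix.mulVec, dotProduct, Real.norm_eq_abs]
    rw [this]
    calc |∑ j, P i j * x j| ≤ ∑ j, |P i j * x j| := Finset.abs_sum_le_sum_abs _ _
      _ ≤ ∑ j, P i j * ‖x‖ := by
          refine Finset.sum_le_sum fun j _ => ?_
          rw [abs_mul, abs_of_nonneg (hPnonneg i j)]
          exact mul_le_mul_of_nonneg_left
            ((Real.norm_eq_abs (x j)) ▸ norm_le_pi_norm x j) (hPnonneg i j)
      _ = ‖x‖ := by rw [← Finset.sum_mul, hProw i, one_mul]
  have hPpow : ∀ (k : ℕ) (x : Fin n → ℝ), ‖(P ^ k) *ᵥ x‖ ≤ ‖x‖ := by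
    intro k
    induction k with
    | zero => intro x; simp [Matrix.one_mulVec]
    | succ k ih =>
        intro x
        rw [pow_succ', ← Matrix.mulVec_mulVec]
        exact (hPnorm _).trans (ih x)
  -- the series of vectors
  set f : ℕ → (Fin n → ℝ) := fun k => (M ^ k) *ᵥ w with hfdef
  have hMpow : ∀ k, M ^ k = ((lam * γ) ^ k) • (P ^ k) := fun k => smul_pow _ _ _
  have hfnorm : ∀ k, ‖f k‖ ≤ (lam * γ) ^ k * ‖w‖ := by
    intro k
    rw [hfdef]
    simp only [hMpow k, Matrix.smul_mulVec, norm_smul, Real.norm_eq_abs,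
      abs_of_nonneg (pow_nonneg hlg0 k)]
    exact mul_le_mul_of_nonneg_left (hPpow k w) (pow_nonneg hlg0 k)
  have hfs : Summable f :=
    Summable.of_norm_bounded ((summable_geometric_of_lt_one hlg0 hlg1).mul_right ‖w‖) hfnorm
  set u : Fin n → ℝ := ∑' k, f k with hudef
  -- continuous linear map given by mulVec by M
  have hMu : M *ᵥ u = ∑' k, f (k + 1) := by
    have hL : M *ᵥ u = LinearMap.toContinuousLinearMap (Matrix.mulVecLin M) u := by
      simp [Matrix.mulVecLin]
    rw [hL, hudef, ContinuousLinearMap.map_tsum _ hfs]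
    refine tsum_congr fun k => ?_
    simp [Matrix.mulVecLin, hfdef, Matrix.mulVec_mulVec, ← pow_succ']
  have hu : (1 - M) *ᵥ u = w := by
    rw [Matrix.sub_mulVec, Matrix.one_mulVec, hMu, hudef, hfs.tsum_eq_zero_add]
    simp [hfdef, Matrix.one_mulVec]
  -- invertibility
  have hdet : (1 - M).det ≠ 0 := by
    intro h0
    obtain ⟨v, hv, hv0⟩ := (Matrix.exists_mulVec_eq_zero_iff).2 h0
    have hvM : v = M *ᵥ v := by
      have := hv0
      rw [Matrix.sub_mulVec, Matrix.one_mulVec, sub_eq_zero] at this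
      exact this
    have hnorm : ‖v‖ ≤ (lam * γ) * ‖v‖ := by
      calc ‖v‖ = ‖M *ᵥ v‖ := by rw [← hvM]
        _ = |lam * γ| * ‖P *ᵥ v‖ := by
            rw [hMdef, Matrix.smul_mulVec, norm_smul, Real.norm_eq_abs]
        _ ≤ (lam * γ) * ‖v‖ := by
            rw [abs_of_nonneg hlg0]
            exact mul_le_mul_of_nonneg_left (hPnorm v) hlg0
    have hvpos : 0 < ‖v‖ := norm_pos_iff.2 hv
    nlinarith
  have hinv : (1 - M)⁻¹ *ᵥ w = u := by
    rw [← hu, Matrix.mulVec_mulVec, Matrix.nonsing_inv_mul _ (isUnit_iff_ne_zero.2 hdet),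
      Matrix.one_mulVec]
  -- iterates
  set a : ℕ → (Fin n → ℝ) := fun m => T^[m] V with hadef
  have hdiff : ∀ m, a (m + 1) - a m = γ ^ m • ((P ^ m) *ᵥ w) := by
    intro m
    induction m with
    | zero => simp [hadef, hwdef]
    | succ m ih =>
        have h1 : a (m + 2) = T (a (m + 1)) := Function.iterate_succ_apply' T (m+1) V
        have h2 : a (m + 1) = T (a m) := Function.iterate_succ_apply' T m V
        rw [h1]
        nth_rewrite 2 [h2]
        have hTsub : ∀ x y, T x - T y = γ • (P *ᵥ (x - y)) := by
          intro x y
          simp only [hTdef, Matrix.mulVec_sub]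
          module
        rw [hTsub, ih]
        rw [pow_succ', pow_succ' P, ← Matrix.mulVec_mulVec]
        rw [Matrix.mulVec_smul]
        module
  -- uniform bound on iterates
  set C : ℝ := ‖V‖ + (1 - γ)⁻¹ * ‖w‖ with hCdef
  have hgeo : ∀ m, ∑ j ∈ Finset.range m, γ ^ j ≤ (1 - γ)⁻¹ := by
    intro m
    have := (summable_geometric_of_lt_one hγ0 hγ1).sum_le_tsum (Finset.range m)
      (fun j _ => pow_nonneg hγ0 j)
    rwa [tsum_geometric_of_lt_one hγ0 hγ1] at this
  have haux : ∀ m, ‖a m‖ ≤ ‖V‖ + (∑ j ∈ Finset.range m, γ ^ j) * ‖w‖ := by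
    intro m
    induction m with
    | zero => simp [hadef]
    | succ m ih =>
        have h1 : a (m + 1) = a m + γ ^ m • ((P ^ m) *ᵥ w) := by
          rw [← hdiff m]; abel
        rw [h1]
        calc ‖a m + γ ^ m • ((P ^ m) *ᵥ w)‖ ≤ ‖a m‖ + ‖γ ^ m • ((P ^ m) *ᵥ w)‖ :=
              norm_add_le _ _
          _ ≤ (‖V‖ + (∑ j ∈ Finset.range m, γ ^ j) * ‖w‖) + γ ^ m * ‖w‖ := by
              refine add_le_add ih ?_
              rw [norm_smul, Real.norm_eq_abs, abs_of_nonneg (pow_nonneg hγ0 m)]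
              exact mul_le_mul_of_nonneg_left (hPpow m w) (pow_nonneg hγ0 m)
          _ = ‖V‖ + (∑ j ∈ Finset.range (m + 1), γ ^ j) * ‖w‖ := by
              rw [Finset.sum_range_succ, add_mul]; ring
  have haC : ∀ m, ‖a m‖ ≤ C := by
    intro m
    refine (haux m).trans ?_
    rw [hCdef]
    exact add_le_add le_rfl (mul_le_mul_of_nonneg_right (hgeo m) (norm_nonneg w))
  have hC0 : 0 ≤ C := le_trans (norm_nonneg (a 0)) (haC 0)
  -- the geometric mixture terms
  set g : ℕ → (Fin n → ℝ) := fun k => ((1 - lam) * lam ^ k) • a (k + 1) with hgdef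
  have hgnorm : ∀ k, ‖g k‖ ≤ lam ^ k * C := by
    intro k
    rw [hgdef]
    simp only [norm_smul, Real.norm_eq_abs]
    have h1 : |(1 - lam) * lam ^ k| ≤ lam ^ k := by
      rw [abs_of_nonneg (mul_nonneg (by linarith) (pow_nonneg hlam0 k))]
      nlinarith [pow_nonneg hlam0 k]
    exact mul_le_mul h1 (haC (k + 1)) (norm_nonneg _) (pow_nonneg hlam0 k)
  have hgs : Summable g :=
    Summable.of_norm_bounded ((summable_geometric_of_lt_one hlam0 hlam1).mul_right C) hgnorm
  -- partial sum identity
  have hfm : ∀ m, f m = lam ^ m • (a (m + 1) - a m) := by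
    intro m
    show (M ^ m) *ᵥ w = _
    rw [hMpow m, hdiff m, Matrix.smul_mulVec, mul_pow, mul_smul]
  have hS : ∀ m, ∑ k ∈ Finset.range m, g k =
      V - lam ^ m • a m + ∑ k ∈ Finset.range m, f k := by
    intro m
    induction m with
    | zero => simp [hadef]
    | succ m ih =>
        rw [Finset.sum_range_succ, Finset.sum_range_succ, ih, hfm m, hgdef]
        simp only [pow_succ]
        module
  -- limits
  have htend0 : Tendsto (fun m => lam ^ m • a m) atTop (𝓝 0) := by
    apply squeeze_zero_norm (a := fun m => lam ^ m * C)
    · intro m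
      rw [norm_smul, Real.norm_eq_abs, abs_of_nonneg (pow_nonneg hlam0 m)]
      exact mul_le_mul_of_nonneg_left (haC m) (pow_nonneg hlam0 m)
    · have := (tendsto_pow_atTop_nhds_zero_of_lt_one hlam0 hlam1).mul_const C
      simpa using this
  have htend : Tendsto (fun m => ∑ k ∈ Finset.range m, g k) atTop (𝓝 (V + u)) := by
    have h1 : Tendsto (fun m => V - lam ^ m • a m + ∑ k ∈ Finset.range m, f k)
        atTop (𝓝 (V - 0 + u)) :=
      ((tendsto_const_nhds.sub htend0).add hfs.hasSum.tendsto_sum_nat)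
    rw [sub_zero] at h1
    refine h1.congr fun m => (hS m).symm
  have htsum : ∑' k, g k = V + u :=
    tendsto_nhds_unique hgs.hasSum.tendsto_sum_nat htend
  calc V + (1 - M)⁻¹ *ᵥ w = V + u := by rw [hinv]
    _ = ∑' k, g k := htsum.symm
end
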